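/- arXiv:2309.07715 — 4 statements merged into one kernel-verified Lean document; each statement's English description precedes it below -/
import Mathlib

section
/- Let H₁, H₂ be finite-dimensional complex Hilbert spaces and U a unitary on H₁ ⊗ H₂. Suppose that for every density matrix ρ on H₁ ⊗ H₂ and every Hermitian operator A on H₁ with spectral projections (Π_x), one has Tr₁( ∑_x U (Π_x ⊗ 1) ρ (Π_x ⊗ 1) U† ) = Tr₁(U ρ U†). Then there exist unitaries U₁ on H₁ and U₂ on H₂ such that U = U₁ ⊗ U₂. -/
open Matrix Kronecker BigOperators
open scoped ComplexOrder

noncomputable section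

/-- Partial trace over the first tensor factor. -/
def ptrace1 {n m : Type} [Fintype n] (ρ : Matrix (n × m) (n × m) ℂ) : Matrix m m ℂ :=
  Matrix.of fun k l => ∑ i, ρ (i, k) (i, l)

/-- A density matrix: positive semidefinite with trace one. -/
def IsDensityMatrix {d : Type} [Fintype d] [DecidableEq d] (ρ : Matrix d d ℂ) : Prop :=
  ρ.PosSemidef ∧ ρ.trace = 1

/-- A complete family of mutually orthogonal Hermitian projections. -/
def IsProjFamily {n ι : Type} [Fintype n] [DecidableEq n] [Fintype ι] [DecidableEq ι]
    (P : ι → Matrix n n ℂ) : Prop :=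
  (∀ i, (P i).IsHermitian) ∧ (∀ i j, P i * P j = if i = j then P i else 0) ∧ ∑ i, P i = 1

/-- `(P, μ)` is the spectral decomposition of the Hermitian operator `A`. -/
def IsSpectralDecomp {n ι : Type} [Fintype n] [DecidableEq n] [Fintype ι] [DecidableEq ι]
    (A : Matrix n n ℂ) (P : ι → Matrix n n ℂ) (μ : ι → ℝ) : Prop :=
  IsProjFamily P ∧ Function.Injective μ ∧ A = ∑ i, (μ i : ℂ) • P i


/-!
Fix `e` and `f` with `⟨f, e⟩ = 0` and measure the first factor with the two projections
`P = |e⟩⟨e| / ‖e‖²` and `1 - P`. Both sides of (MC) are linear in `ρ` and density matrices span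
all matrices, so (MC) holds for every `ρ`; the measurement annihilates `ρ = |e⟩⟨f| ⊗ E_{kl}`, hence
`Tr₁ (U ρ U†) = 0`. Its `(a, b)` entry is `⟨B_{bl} f, B_{ak} e⟩`, where `B_{ak}` are the `n × n`
blocks of `U`, so every `B_{bl}† B_{ak}` maps each vector into its own span and is a scalar.
Rescaling a nonzero block to a unitary `V`, every block is a multiple of `V`, i.e. `U = V ⊗ W`,
and `W` is unitary because `U` and `V` are.
-/

namespace Matrix

def blockAt {n m α : Type*} (U : Matrix (n × m) (n × m) α) (a k : m) : Matrix n n α :=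
  U.submatrix (·, a) (·, k)

lemma eq_kronecker_of_blockAt_eq_smul {n m α : Type*} [CommMagma α]
    {U : Matrix (n × m) (n × m) α} {V : Matrix n n α} {W : Matrix m m α}
    (h : ∀ a k, U.blockAt a k = W a k • V) : U = V ⊗ₖ W := by
  ext ⟨p, a⟩ ⟨i, k⟩
  simpa [blockAt, mul_comm] using congr_fun (congr_fun (h a k) p) i

section RankOneProj

variable {𝕜 n : Type*} [RCLike 𝕜] [Fintype n]

/-- Since `0⁻¹ = 0`, this is `0` for `e = 0`, so the identities below hold without `e ≠ 0`. -/
def rankOneProj (e : n → 𝕜) : Matrix n n 𝕜 :=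
  (star e ⬝ᵥ e)⁻¹ • vecMulVec e (star e)

variable (e : n → 𝕜)

lemma rankOneProj_isHermitian : (rankOneProj e).IsHermitian := by
  rw [IsHermitian, rankOneProj, conjTranspose_smul, conjTranspose_vecMulVec, star_star, star_inv₀,
    (IsSelfAdjoint.of_nonneg (dotProduct_star_self_nonneg e)).star_eq]

lemma rankOneProj_mulVec_self : rankOneProj e *ᵥ e = e := by
  by_cases he : e = 0
  · simp [he]
  rw [rankOneProj, smul_mulVec, vecMulVec_mulVec, op_smul_eq_smul, smul_smul,
    inv_mul_cancel₀ (dotProduct_star_self_eq_zero.not.2 he), one_smul]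

lemma rankOneProj_mul_vecMulVec (w : n → 𝕜) : rankOneProj e * vecMulVec e w = vecMulVec e w := by
  rw [mul_vecMulVec, rankOneProj_mulVec_self]

lemma vecMulVec_mul_rankOneProj {f : n → 𝕜} (hfe : star f ⬝ᵥ e = 0) :
    vecMulVec e (star f) * rankOneProj e = 0 := by
  rw [rankOneProj, Matrix.mul_smul, vecMulVec_mul_vecMulVec, hfe, zero_smul, vecMulVec_zero,
    smul_zero]

lemma rankOneProj_mul_self : rankOneProj e * rankOneProj e = rankOneProj e := by
  rw [rankOneProj, Matrix.smul_mul, Matrix.mul_smul, vecMulVec_mul_vecMulVec, smul_smul,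
    vecMulVec_smul, smul_smul]
  simpa using congr_arg (· • vecMulVec e (star e)) (mul_self_mul_inv (star e ⬝ᵥ e)⁻¹)

end RankOneProj

lemma vecMulVec_star_eq_polarization {n : Type*} (x y : n → ℂ) :
    vecMulVec x (star y) = (4 : ℂ)⁻¹ • (vecMulVec (x + y) (star (x + y)) -
      vecMulVec (x - y) (star (x - y)) + Complex.I • vecMulVec (x + Complex.I • y)
      (star (x + Complex.I • y)) - Complex.I • vecMulVec (x - Complex.I • y)
      (star (x - Complex.I • y))) := by
  ext i j
  simp only [Matrix.smul_apply, Matrix.add_apply, Matrix.sub_apply, vecMulVec_apply,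
    Pi.star_apply, Pi.add_apply, Pi.sub_apply, Pi.smul_apply, smul_eq_mul, star_add, star_sub,
    star_mul', RCLike.star_def, Complex.conj_I]
  linear_combination
    (x i * starRingEnd ℂ (y j) - y i * starRingEnd ℂ (x j)) / 2 * Complex.I_sq

lemma exists_eq_smul_one_of_forall_dotProduct_mulVec_eq_zero {R n : Type*} [CommRing R]
    [StarRing R] [Fintype n] [DecidableEq n] {T : Matrix n n R}
    (h : ∀ e f : n → R, star f ⬝ᵥ e = 0 → star f ⬝ᵥ T *ᵥ e = 0) : ∃ c : R, T = c • 1 := by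
  rcases isEmpty_or_nonempty n with hn | ⟨⟨i₀⟩⟩
  · exact ⟨0, Subsingleton.elim _ _⟩
  have hoff {i j : n} (hij : i ≠ j) : T j i = 0 := by
    simpa [hij] using h (Pi.single i 1) (Pi.single j 1) (by simp [hij])
  have hdiag (i : n) : T i i = T i₀ i₀ := by
    rcases eq_or_ne i i₀ with rfl | hi
    · rfl
    have := h (Pi.single i 1 + Pi.single i₀ 1) (Pi.single i 1 - Pi.single i₀ 1) (by simp [hi])
    simpa [mulVec_add, mulVec_single_one, hoff hi, hoff hi.symm, add_neg_eq_zero] using this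
  refine ⟨T i₀ i₀, ext fun i j => ?_⟩
  rcases eq_or_ne i j with rfl | hij
  · simp [hdiag]
  · simp [hoff hij.symm, hij]

section Unitary

variable {𝕜 n m : Type*} [RCLike 𝕜] [Fintype n] [DecidableEq n] [Fintype m] [DecidableEq m]

lemma exists_smul_mem_unitaryGroup_of_conjTranspose_mul_self_eq_smul_one {A : Matrix n n 𝕜}
    {c : 𝕜} (hA : A ≠ 0) (hAA : Aᴴ * A = c • 1) : ∃ r : 𝕜, r • A ∈ unitaryGroup n 𝕜 := by
  obtain ⟨i, -, -⟩ : ∃ i j, A i j ≠ 0 := by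
    by_contra! h0
    exact hA (ext h0)
  have hc : 0 ≤ c := by
    simpa [hAA] using (posSemidef_conjTranspose_mul_self A).diag_nonneg (i := i)
  obtain ⟨t, ht, rfl⟩ := RCLike.nonneg_iff_exists_ofReal.1 hc
  have ht0 : t ≠ 0 := by
    rintro rfl
    exact hA (conjTranspose_mul_self_eq_zero.1 (by simpa using hAA))
  refine ⟨((√t)⁻¹ : ℝ), ?_⟩
  rw [mem_unitaryGroup_iff', star_eq_conjTranspose, conjTranspose_smul, Matrix.smul_mul,
    Matrix.mul_smul, hAA, smul_smul, smul_smul, RCLike.star_def, RCLike.conj_ofReal,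
    ← RCLike.ofReal_mul, ← RCLike.ofReal_mul, ← mul_inv, Real.mul_self_sqrt ht,
    inv_mul_cancel₀ ht0, RCLike.ofReal_one, one_smul]

lemma mem_unitaryGroup_of_kronecker_mem_unitaryGroup [Nonempty n] {V : Matrix n n 𝕜}
    {W : Matrix m m 𝕜} (hV : V ∈ unitaryGroup n 𝕜) (hVW : V ⊗ₖ W ∈ unitaryGroup (n × m) 𝕜) :
    W ∈ unitaryGroup m 𝕜 := by
  rw [mem_unitaryGroup_iff', star_eq_conjTranspose] at hV hVW ⊢
  rw [conjTranspose_kronecker, ← mul_kronecker_mul, hV] at hVW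
  obtain ⟨i⟩ := ‹Nonempty n›
  ext k l
  simpa [one_apply] using congr_fun (congr_fun hVW (i, k)) (i, l)

theorem exists_kronecker_of_forall_conjTranspose_blockAt_mul_blockAt_eq_smul_one
    {U : Matrix (n × m) (n × m) 𝕜} (hU : U ∈ unitaryGroup (n × m) 𝕜)
    (h : ∀ k a l b, ∃ c : 𝕜, (U.blockAt b l)ᴴ * U.blockAt a k = c • 1) :
    ∃ U₁ U₂, U₁ ∈ unitaryGroup n 𝕜 ∧ U₂ ∈ unitaryGroup m 𝕜 ∧ U = U₁ ⊗ₖ U₂ := by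
  rcases isEmpty_or_nonempty (n × m) with hnm | hnm
  · exact ⟨1, 1, one_mem _, one_mem _, Subsingleton.elim _ _⟩
  obtain ⟨⟨p, a₀⟩, ⟨i, k₀⟩, hU₀⟩ : ∃ x y, U x y ≠ 0 := by
    by_contra! h0
    simpa [show U = 0 from ext h0] using mem_unitaryGroup_iff.1 hU
  have : Nonempty n := ⟨p⟩
  have hB₀ : U.blockAt a₀ k₀ ≠ 0 := fun h0 =>
    hU₀ (by simpa [blockAt] using congr_fun (congr_fun h0 p) i)
  obtain ⟨c₀, hc₀⟩ := h k₀ a₀ k₀ a₀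
  obtain ⟨r, hV⟩ := exists_smul_mem_unitaryGroup_of_conjTranspose_mul_self_eq_smul_one hB₀ hc₀
  set V := r • U.blockAt a₀ k₀
  have hblock (a k) : ∃ w : 𝕜, U.blockAt a k = w • V := by
    obtain ⟨c, hc⟩ := h k a k₀ a₀
    refine ⟨star r * c, ?_⟩
    calc U.blockAt a k = V * (Vᴴ * U.blockAt a k) := by
          rw [← Matrix.mul_assoc, ← star_eq_conjTranspose, mem_unitaryGroup_iff.1 hV,
            Matrix.one_mul]
      _ = (star r * c) • V := by
          rw [conjTranspose_smul, Matrix.smul_mul (star r), hc, smul_smul, Matrix.mul_smul,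
            Matrix.mul_one]
  choose w hw using hblock
  have hUVW := eq_kronecker_of_blockAt_eq_smul hw
  exact ⟨V, w, hV, mem_unitaryGroup_of_kronecker_mem_unitaryGroup hV (hUVW ▸ hU), hUVW⟩

end Unitary

end Matrix

lemma pair_mul_mul_eq_zero {R : Type*} [Ring R] {P E : R} (hPE : P * E = E) (hEP : E * P = 0)
    (x : Fin 2) : ![P, 1 - P] x * E * ![P, 1 - P] x = 0 := by
  fin_cases x
  · simp [hPE, hEP]
  · simp [sub_mul, mul_sub, hPE]

section Density

variable {n : Type} [Fintype n] [DecidableEq n]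

lemma isSpectralDecomp_of_isHermitian_of_mul_self {P : Matrix n n ℂ} (hP : P.IsHermitian)
    (hPP : P * P = P) : IsSpectralDecomp P ![P, 1 - P] ![1, 0] := by
  refine ⟨⟨?_, ?_, by simp⟩, ?_, by simp⟩
  · intro i
    fin_cases i
    · exact hP
    · exact isHermitian_one.sub hP
  · intro i j
    fin_cases i <;> fin_cases j <;> simp [Matrix.mul_sub, Matrix.sub_mul, hPP]
  · intro i j h
    fin_cases i <;> fin_cases j <;> simp_all

lemma isDensityMatrix_rankOneProj {e : n → ℂ} (he : e ≠ 0) : IsDensityMatrix (rankOneProj e) := by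
  constructor
  · simpa only [(rankOneProj_isHermitian e).eq, rankOneProj_mul_self] using
      posSemidef_conjTranspose_mul_self (rankOneProj e)
  · rw [rankOneProj, trace_smul, trace_vecMulVec, dotProduct_comm e, smul_eq_mul,
      inv_mul_cancel₀ (dotProduct_star_self_eq_zero.not.2 he)]

lemma span_isDensityMatrix_eq_top :
    Submodule.span ℂ {ρ : Matrix n n ℂ | IsDensityMatrix ρ} = ⊤ := by
  set S := Submodule.span ℂ {ρ : Matrix n n ℂ | IsDensityMatrix ρ}
  have hself (v : n → ℂ) : vecMulVec v (star v) ∈ S := by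
    by_cases hv : v = 0
    · simp [hv]
    have hvv : vecMulVec v (star v) = (star v ⬝ᵥ v) • rankOneProj v := by
      rw [rankOneProj, smul_smul, mul_inv_cancel₀ (dotProduct_star_self_eq_zero.not.2 hv),
        one_smul]
    rw [hvv]
    exact S.smul_mem _ (Submodule.subset_span (isDensityMatrix_rankOneProj hv))
  have hrankOne (x y : n → ℂ) : vecMulVec x (star y) ∈ S := by
    rw [vecMulVec_star_eq_polarization]
    exact S.smul_mem _ (S.sub_mem (S.add_mem (S.sub_mem (hself _) (hself _))
      (S.smul_mem _ (hself _))) (S.smul_mem _ (hself _)))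
  refine eq_top_iff.2 fun ρ _ => ?_
  rw [matrix_eq_sum_single ρ]
  refine S.sum_mem fun i _ => S.sum_mem fun j _ => ?_
  have hsingle : single i j (ρ i j) = ρ i j • vecMulVec (Pi.single i 1) (star (Pi.single j 1)) := by
    rw [Pi.star_single, star_one, ← single_eq_single_vecMulVec_single, smul_single, smul_eq_mul,
      mul_one]
  rw [hsingle]
  exact S.smul_mem _ (hrankOne _ _)

end Density

def ptrace1ₗ {n m : Type} [Fintype n] : Matrix (n × m) (n × m) ℂ →ₗ[ℂ] Matrix m m ℂ where
  toFun := ptrace1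
  map_add' A B := by ext k l; simp [ptrace1, Finset.sum_add_distrib]
  map_smul' c A := by ext k l; simp [ptrace1, Finset.mul_sum]

section PartialTrace

variable {n m : Type} [Fintype n] [Fintype m] [DecidableEq m]

lemma ptrace1_conj_eq_of_forall_isDensityMatrix [DecidableEq n] {ι : Type} [Fintype ι]
    (U : Matrix (n × m) (n × m) ℂ) (Q : ι → Matrix n n ℂ)
    (h : ∀ ρ, IsDensityMatrix ρ →
      ptrace1 (∑ x, U * (Q x ⊗ₖ (1 : Matrix m m ℂ)) * ρ * (Q x ⊗ₖ (1 : Matrix m m ℂ)) * Uᴴ) =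
        ptrace1 (U * ρ * Uᴴ))
    (ρ : Matrix (n × m) (n × m) ℂ) :
    ptrace1 (∑ x, U * (Q x ⊗ₖ (1 : Matrix m m ℂ)) * ρ * (Q x ⊗ₖ (1 : Matrix m m ℂ)) * Uᴴ) =
      ptrace1 (U * ρ * Uᴴ) := by
  let Φ := ptrace1ₗ ∘ₗ ∑ x, LinearMap.mulLeftRight ℂ
    (U * (Q x ⊗ₖ (1 : Matrix m m ℂ)), (Q x ⊗ₖ (1 : Matrix m m ℂ)) * Uᴴ)
  let Ψ := ptrace1ₗ ∘ₗ LinearMap.mulLeftRight ℂ (U, Uᴴ)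
  have hΦ (σ) : Φ σ = ptrace1 (∑ x, U * (Q x ⊗ₖ (1 : Matrix m m ℂ)) * σ *
      (Q x ⊗ₖ (1 : Matrix m m ℂ)) * Uᴴ) := by
    simp [Φ, ptrace1ₗ, Matrix.mul_assoc]
  have hΨ (σ) : Ψ σ = ptrace1 (U * σ * Uᴴ) := rfl
  have hΦΨ : Φ = Ψ := LinearMap.ext_on span_isDensityMatrix_eq_top fun σ hσ => by
    rw [hΦ, hΨ, h σ hσ]
  rw [← hΦ, ← hΨ, hΦΨ]

lemma ptrace1_conj_kronecker_eq_zero [DecidableEq n] {ι : Type} [Fintype ι]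
    (U : Matrix (n × m) (n × m) ℂ) (Q : ι → Matrix n n ℂ)
    (h : ∀ ρ, IsDensityMatrix ρ →
      ptrace1 (∑ x, U * (Q x ⊗ₖ (1 : Matrix m m ℂ)) * ρ * (Q x ⊗ₖ (1 : Matrix m m ℂ)) * Uᴴ) =
        ptrace1 (U * ρ * Uᴴ))
    {E : Matrix n n ℂ} (hE : ∀ x, Q x * E * Q x = 0) (S : Matrix m m ℂ) :
    ptrace1 (U * (E ⊗ₖ S) * Uᴴ) = 0 := by
  have hterm (x) : U * (Q x ⊗ₖ (1 : Matrix m m ℂ)) * (E ⊗ₖ S) * (Q x ⊗ₖ (1 : Matrix m m ℂ)) *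
      Uᴴ = 0 := by
    rw [Matrix.mul_assoc U, Matrix.mul_assoc U, ← mul_kronecker_mul, ← mul_kronecker_mul, hE,
      zero_kronecker, Matrix.mul_zero, Matrix.zero_mul]
  rw [← ptrace1_conj_eq_of_forall_isDensityMatrix U Q h, Finset.sum_eq_zero fun x _ => hterm x]
  exact map_zero ptrace1ₗ

lemma ptrace1_conj_kronecker_single_apply (U : Matrix (n × m) (n × m) ℂ) (E : Matrix n n ℂ)
    (k l a b : m) :
    ptrace1 (U * (E ⊗ₖ single k l 1) * Uᴴ) a b =
      trace ((U.blockAt b l)ᴴ * U.blockAt a k * E) := by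
  simp only [ptrace1, trace, diag, of_apply, Matrix.mul_apply, Fintype.sum_prod_type,
    kroneckerMap_apply, single_apply, conjTranspose_apply, Matrix.blockAt, submatrix_apply]
  simp only [ite_and, mul_ite, mul_one, mul_zero, Finset.sum_ite_eq, Finset.mem_univ, ↓reduceIte,
    Finset.sum_ite_irrel, Finset.sum_const_zero, RCLike.star_def, ite_mul, Finset.sum_mul,
    zero_mul]
  rw [Finset.sum_comm]
  refine Finset.sum_congr rfl fun j _ => ?_
  rw [Finset.sum_comm]
  exact Finset.sum_congr rfl fun i _ => Finset.sum_congr rfl fun p _ => by ring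

end PartialTrace

/-- **(MC) ⇒ (F).** If every non-selective projective measurement on the first subsystem,
followed by the joint unitary evolution `U`, leaves the reduced state of the second
subsystem unchanged, then `U` factorizes as `U₁ ⊗ U₂` with `U₁, U₂` unitary. -/
theorem MC_implies_factorization
    (n m : Type) [Fintype n] [DecidableEq n] [Fintype m] [DecidableEq m]
    (U : Matrix (n × m) (n × m) ℂ) (hU : U ∈ Matrix.unitaryGroup (n × m) ℂ)
    (hMC : ∀ (ι : Type) [Fintype ι] [DecidableEq ι]
        (P : ι → Matrix n n ℂ) (μ : ι → ℝ) (A : Matrix n n ℂ),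
        IsSpectralDecomp A P μ →
        ∀ ρ : Matrix (n × m) (n × m) ℂ, IsDensityMatrix ρ →
          ptrace1 (∑ x, U * (P x ⊗ₖ (1 : Matrix m m ℂ)) * ρ *
              (P x ⊗ₖ (1 : Matrix m m ℂ)) * Uᴴ)
            = ptrace1 (U * ρ * Uᴴ)) :
    ∃ U₁ U₂, U₁ ∈ Matrix.unitaryGroup n ℂ ∧ U₂ ∈ Matrix.unitaryGroup m ℂ ∧
      U = U₁ ⊗ₖ U₂ := by
  refine exists_kronecker_of_forall_conjTranspose_blockAt_mul_blockAt_eq_smul_one hU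
    fun k a l b => exists_eq_smul_one_of_forall_dotProduct_mulVec_eq_zero fun e f hfe => ?_
  have hmeas := hMC (Fin 2) _ _ _ (isSpectralDecomp_of_isHermitian_of_mul_self
    (rankOneProj_isHermitian e) (rankOneProj_mul_self e))
  have hE := pair_mul_mul_eq_zero (rankOneProj_mul_vecMulVec e (star f))
    (vecMulVec_mul_rankOneProj e hfe)
  have hout := congr_fun (congr_fun
    (ptrace1_conj_kronecker_eq_zero U _ hmeas hE (single k l 1)) a) b
  rwa [ptrace1_conj_kronecker_single_apply, mul_vecMulVec, trace_vecMulVec, dotProduct_comm]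
    at hout
end
end

section
/- Let A and B be Hermitian operators on a finite-dimensional complex Hilbert space, with spectral projections (Π_x) for A and (Q_y) for B. If ∑_x Π_x Q_y Π_x = Q_y for every eigenvalue y of B, then A and B commute. -/
open Matrix Kronecker BigOperators
open scoped ComplexOrder

noncomputable section

/-- **Lüders-type lemma.** If `∑ₓ Πₓ Q_y Πₓ = Q_y` for every spectral projection `Q_y`
of `B`, where `(Πₓ)` are the spectral projections of `A`, then `A` and `B` commute. -/
theorem luders_commute
    (n : Type) [Fintype n] [DecidableEq n]
    (ι κ : Type) [Fintype ι] [DecidableEq ι] [Fintype κ] [DecidableEq κ]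
    (A B : Matrix n n ℂ) (hA : A.IsHermitian) (hB : B.IsHermitian)
    (P : ι → Matrix n n ℂ) (μ : ι → ℝ) (hPA : IsSpectralDecomp A P μ)
    (Q : κ → Matrix n n ℂ) (ν : κ → ℝ) (hQB : IsSpectralDecomp B Q ν)
    (h : ∀ y, ∑ x, P x * Q y * P x = Q y) :
    A * B = B * A := by
  obtain ⟨⟨hPh, hPorth, hPsum⟩, _, hAeq⟩ := hPA
  obtain ⟨⟨hQh, hQorth, hQsum⟩, _, hBeq⟩ := hQB
  have key : ∀ i y, P i * Q y = Q y * P i := by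
    intro i y
    have h1 : P i * Q y = P i * Q y * P i := by
      conv_lhs => rw [← h y]
      rw [Finset.mul_sum]
      rw [Finset.sum_eq_single i]
      · rw [← mul_assoc, ← mul_assoc, hPorth i i, if_pos rfl, mul_assoc]
      · intro j _ hj
        rw [← mul_assoc, ← mul_assoc, hPorth i j, if_neg (Ne.symm hj), zero_mul, zero_mul]
      · intro hi; exact absurd (Finset.mem_univ i) hi
    have h2 : Q y * P i = P i * Q y * P i := by
      conv_lhs => rw [← h y]
      rw [Finset.sum_mul]
      rw [Finset.sum_eq_single i]
      · rw [mul_assoc (P i * Q y), hPorth i i, if_pos rfl]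
      · intro j _ hj
        rw [mul_assoc (P j * Q y), hPorth j i, if_neg hj, mul_zero]
      · intro hi; exact absurd (Finset.mem_univ i) hi
    rw [h1, h2]
  rw [hAeq, hBeq, Finset.sum_mul_sum, Finset.sum_mul_sum, Finset.sum_comm]
  apply Finset.sum_congr rfl; intro y _
  apply Finset.sum_congr rfl; intro i _
  rw [smul_mul_assoc, mul_smul_comm, smul_mul_assoc, mul_smul_comm, key i y, smul_comm]
end
end

section
/- Let A, B be Hermitian operators on a finite-dimensional complex Hilbert space H with dim H ≥ 1. Suppose that for every density matrix ρ on H, Tr(∑_x Π_x ρ Π_x · Q_y) = Tr(ρ Q_y) for every spectral projection Q_y of B, where (Π_x) are the spectral projections of A. Then [A, B] = 0. -/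
open Matrix Kronecker BigOperators
open scoped ComplexOrder

/-! Testing the hypothesis on the pure states `|v⟩⟨v| / ⟨v|v⟩` and moving the pinching
`ρ ↦ ∑ x, P x ρ P x` onto `Q y` by cyclicity of the trace shows that `∑ x, P x Q y P x` and `Q y`
have the same quadratic form, hence are equal since the scalars are complex. Multiplying this
identity by `P x` on the left or on the right gives `P x Q y = P x Q y P x = Q y P x`, and `A`,
`B` are linear combinations of these commuting projections. -/

noncomputable section

namespace Matrix

variable {n : Type} [Fintype n]

theorem eq_zero_of_forall_star_dotProduct_mulVec_eq_zero [DecidableEq n] {D : Matrix n n ℂ}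
    (h : ∀ v : n → ℂ, star v ⬝ᵥ (D *ᵥ v) = 0) : D = 0 := by
  suffices toEuclideanLin D = 0 by simpa using this
  refine (inner_map_self_eq_zero _).mp fun x => inner_eq_zero_symm.mp ?_
  simpa [EuclideanSpace.inner_eq_star_dotProduct, dotProduct_comm] using h x

theorem trace_vecMulVec_star_mul (v : n → ℂ) (X : Matrix n n ℂ) :
    (vecMulVec v (star v) * X).trace = star v ⬝ᵥ (X *ᵥ v) := by
  rw [vecMulVec_mul, trace_vecMulVec, dotProduct_comm, ← dotProduct_mulVec]

theorem trace_sum_mul_mul_mul {ι R : Type} [Fintype ι] [CommSemiring R]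
    (P : ι → Matrix n n R) (ρ X : Matrix n n R) :
    ((∑ i, P i * ρ * P i) * X).trace = (ρ * ∑ i, P i * X * P i).trace := by
  simp only [Finset.sum_mul, Finset.mul_sum, trace_sum]
  refine Finset.sum_congr rfl fun i _ => ?_
  simp only [mul_assoc]
  rw [trace_mul_comm]
  simp only [mul_assoc]

end Matrix

section

variable {n : Type} [Fintype n] [DecidableEq n]

theorem isDensityMatrix_inv_smul_vecMulVec {v : n → ℂ} (hv : v ≠ 0) :
    IsDensityMatrix ((star v ⬝ᵥ v)⁻¹ • vecMulVec v (star v)) := by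
  refine ⟨(posSemidef_vecMulVec_self_star v).smul
    (inv_nonneg.mpr (dotProduct_star_self_nonneg v)), ?_⟩
  rw [trace_smul, trace_vecMulVec, dotProduct_comm v, smul_eq_mul,
    inv_mul_cancel₀ (dotProduct_star_self_eq_zero.not.mpr hv)]

theorem eq_of_forall_isDensityMatrix_trace_mul_eq {X Y : Matrix n n ℂ}
    (h : ∀ ρ, IsDensityMatrix ρ → (ρ * X).trace = (ρ * Y).trace) : X = Y := by
  refine sub_eq_zero.mp (eq_zero_of_forall_star_dotProduct_mulVec_eq_zero fun v => ?_)
  rcases eq_or_ne v 0 with rfl | hv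
  · simp
  have := h _ (isDensityMatrix_inv_smul_vecMulVec hv)
  simp only [smul_mul, trace_smul, trace_vecMulVec_star_mul, smul_eq_mul] at this
  rw [sub_mulVec, dotProduct_sub, sub_eq_zero]
  exact mul_left_cancel₀ (inv_ne_zero (dotProduct_star_self_eq_zero.not.mpr hv)) this

end

theorem commute_of_sum_mul_mul_eq_self {ι R : Type} [Fintype ι] [DecidableEq ι] [Ring R]
    {P : ι → R} (hP : ∀ i j, P i * P j = if i = j then P i else 0) {X : R}
    (hX : ∑ i, P i * X * P i = X) (i : ι) : Commute (P i) X := by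
  have hleft : P i * X = P i * X * P i := by
    conv_lhs => rw [← hX]
    simp [Finset.mul_sum, ← mul_assoc, hP]
  have hright : X * P i = P i * X * P i := by
    conv_lhs => rw [← hX]
    simp [Finset.sum_mul, mul_assoc, hP]
  exact hleft.trans hright.symm

theorem luders_commute_of_states_general
    (n : Type) [Fintype n] [DecidableEq n]
    (ι κ : Type) [Fintype ι] [DecidableEq ι] [Fintype κ] [DecidableEq κ]
    (A B : Matrix n n ℂ)
    (P : ι → Matrix n n ℂ) (μ : ι → ℝ) (hPA : IsSpectralDecomp A P μ)
    (Q : κ → Matrix n n ℂ) (ν : κ → ℝ) (hQB : IsSpectralDecomp B Q ν)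
    (h : ∀ ρ : Matrix n n ℂ, IsDensityMatrix ρ →
      ∀ y, ((∑ x, P x * ρ * P x) * Q y).trace = (ρ * Q y).trace) :
    A * B - B * A = 0 := by
  obtain ⟨⟨-, hPorth, -⟩, -, rfl⟩ := hPA
  obtain ⟨-, -, rfl⟩ := hQB
  have hpinch (y : κ) : ∑ x, P x * Q y * P x = Q y :=
    eq_of_forall_isDensityMatrix_trace_mul_eq fun ρ hρ => by
      rw [← trace_sum_mul_mul_mul, h ρ hρ y]
  have hcomm : Commute (∑ x, (μ x : ℂ) • P x) (∑ y, (ν y : ℂ) • Q y) :=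
    .sum_left _ _ _ fun x _ => .sum_right _ _ _ fun y _ =>
      ((commute_of_sum_mul_mul_eq_self hPorth (hpinch y) x).smul_left _).smul_right _
  exact sub_eq_zero.mpr hcomm.eq

/-- If the Born-rule probabilities for measuring `B` are unchanged when a non-selective
projective measurement of `A` is first applied to any state, then `[A, B] = 0`. -/
theorem luders_commute_of_states
    (n : Type) [Fintype n] [DecidableEq n] [Nonempty n]
    (ι κ : Type) [Fintype ι] [DecidableEq ι] [Fintype κ] [DecidableEq κ]
    (A B : Matrix n n ℂ) (hA : A.IsHermitian) (hB : B.IsHermitian)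
    (P : ι → Matrix n n ℂ) (μ : ι → ℝ) (hPA : IsSpectralDecomp A P μ)
    (Q : κ → Matrix n n ℂ) (ν : κ → ℝ) (hQB : IsSpectralDecomp B Q ν)
    (h : ∀ ρ : Matrix n n ℂ, IsDensityMatrix ρ →
      ∀ y, ((∑ x, P x * ρ * P x) * Q y).trace = (ρ * Q y).trace) :
    A * B - B * A = 0 :=
  luders_commute_of_states_general n ι κ A B P μ hPA Q ν hQB h
end
end

section
/- Let H₁, H₂ be finite-dimensional complex Hilbert spaces with dim H₂ = n₂, let (T_i) be a basis of the space of operators on H₁, and (|k⟩⟨l|) the canonical basis of operators on H₂. Suppose U = ∑_{i,k,l} α_{ikl} T_i ⊗ |k⟩⟨l| is a unitary such that for all k,k',l,l' there is λ_{kk'll'} ∈ ℂ with (∑_i α_{ik'l'} T_i)† (∑_i α_{ikl} T_i) = λ_{kk'll'}·1. Then there exist an operator V on H₁ and scalars β_{kl} with α_{ikl} = β_{kl} α_{ik₀l₀} for some fixed (k₀,l₀), and U factorizes as U = U₁ ⊗ U₂ with U₁, U₂ unitary. -/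
/-!
The operators `S k l = ∑ᵢ α_{ikl} T_i` are the blocks of `U`. Since `U ≠ 0`, some block
`A = S k₀ l₀` is nonzero, and `A† A = c • 1` with `c ≠ 0` makes `c⁻¹ A†` an inverse of `A`;
then `A† S k l = d • 1` forces `S k l = (c⁻¹ d) • A`, which by linear independence of the `T_i`
is the factorization of the coefficients, and gives `U = A ⊗ B`. As `A† A ≥ 0`, `c` is a
positive real, so `A / √c` is unitary, and then so is `√c B`.
-/

open Matrix Kronecker BigOperators
open scoped ComplexOrder

noncomputable section

theorem LinearIndependent.eq_mul_of_sum_smul_eq_smul_sum {K V ι : Type*} [Semiring K]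
    [AddCommMonoid V] [Module K V] [Fintype ι] {T : ι → V} (hT : LinearIndependent K T)
    {a a' : ι → K} {b : K} (h : ∑ i, a i • T i = b • ∑ i, a' i • T i) (i : ι) :
    a i = b * a' i :=
  Fintype.linearIndependent_iffₛ.mp hT a (fun i => b * a' i)
    (by simp_rw [h, Finset.smul_sum, smul_smul]) i

namespace Matrix

section Kronecker

variable {ι m n R : Type*} [Fintype ι] [Fintype m] [DecidableEq m] [CommSemiring R]

theorem sum_smul_kronecker_single (α : ι → m → m → R) (T : ι → Matrix n n R) :
    ∑ i, ∑ k, ∑ l, α i k l • (T i ⊗ₖ single k l (1 : R)) =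
      ∑ k, ∑ l, (∑ i, α i k l • T i) ⊗ₖ single k l (1 : R) := by
  ext ⟨r, k⟩ ⟨s, l⟩
  simp [sum_apply, single_apply, ite_and]

theorem kronecker_eq_sum_smul_kronecker_single (A : Matrix n n R) (B : Matrix m m R) :
    A ⊗ₖ B = ∑ k, ∑ l, (B k l • A) ⊗ₖ single k l (1 : R) := by
  ext ⟨r, k⟩ ⟨s, l⟩
  simp [sum_apply, single_apply, ite_and, mul_comm]

end Kronecker

variable {m n R : Type*} [Fintype m] [DecidableEq m] [Fintype n] [DecidableEq n]

theorem eq_smul_of_conjTranspose_mul_eq_smul_one [Field R] [StarRing R] {A S : Matrix n n R}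
    {c d : R} (hc : c ≠ 0) (hA : Aᴴ * A = c • 1) (hS : Aᴴ * S = d • 1) :
    S = (c⁻¹ * d) • A := by
  have hA_inv : A * (c⁻¹ • Aᴴ) = 1 :=
    mul_eq_one_comm.mp (by rw [smul_mul, hA, smul_smul, inv_mul_cancel₀ hc, one_smul])
  calc S = A * (c⁻¹ • Aᴴ) * S := by rw [hA_inv, Matrix.one_mul]
    _ = c⁻¹ • (A * (Aᴴ * S)) := by rw [mul_smul_comm, smul_mul, Matrix.mul_assoc]
    _ = (c⁻¹ * d) • A := by rw [hS, mul_smul_comm, Matrix.mul_one, smul_smul]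

theorem mem_unitaryGroup_of_kronecker_mem [CommRing R] [StarRing R] [Nonempty n]
    {U₁ : Matrix n n R} {U₂ : Matrix m m R} (h₁ : U₁ ∈ unitaryGroup n R)
    (h : U₁ ⊗ₖ U₂ ∈ unitaryGroup (n × m) R) : U₂ ∈ unitaryGroup m R := by
  rw [mem_unitaryGroup_iff', star_eq_conjTranspose] at *
  have h₂ : (1 : Matrix n n R) ⊗ₖ (U₂ᴴ * U₂) = 1 ⊗ₖ 1 := by
    rw [one_kronecker_one, ← h₁, mul_kronecker_mul, ← conjTranspose_kronecker, h]
  obtain ⟨p⟩ := ‹Nonempty n›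
  ext k l
  simpa using congrFun₂ h₂ (p, k) (p, l)

theorem exists_smul_mem_unitaryGroup {𝕜 : Type*} [RCLike 𝕜] [Nonempty n] {A : Matrix n n 𝕜}
    {c : 𝕜} (hc : c ≠ 0) (hA : Aᴴ * A = c • 1) : ∃ t : 𝕜, t ≠ 0 ∧ t • A ∈ unitaryGroup n 𝕜 := by
  obtain ⟨p⟩ := ‹Nonempty n›
  obtain ⟨x, hx0, rfl⟩ : ∃ x ≥ (0 : ℝ), (x : 𝕜) = c := RCLike.nonneg_iff_exists_ofReal.mp
    (by simpa [hA] using (posSemidef_conjTranspose_mul_self A).diag_nonneg (i := p))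
  have hx : 0 < x := lt_of_le_of_ne hx0 (by rintro rfl; simp at hc)
  have ht : (√x)⁻¹ * (√x)⁻¹ * x = 1 := by
    rw [← mul_inv, Real.mul_self_sqrt hx0, inv_mul_cancel₀ hx.ne']
  refine ⟨((√x)⁻¹ : ℝ), by simpa using (Real.sqrt_pos.mpr hx).ne', ?_⟩
  rw [mem_unitaryGroup_iff', star_smul, star_eq_conjTranspose, smul_mul, mul_smul_comm, hA,
    smul_smul, smul_smul, RCLike.star_def, RCLike.conj_ofReal, ← RCLike.ofReal_mul,
    ← RCLike.ofReal_mul, ht, RCLike.ofReal_one, one_smul]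

end Matrix

/-- If a unitary `U = ∑ α_{ikl} T_i ⊗ |k⟩⟨l|` is such that all the operators
`(∑ᵢ α_{ik'l'} T_i)† (∑ᵢ α_{ikl} T_i)` are scalar multiples of the identity, then the
coefficients factorize (`α_{ikl} = β_{kl} α_{ik₀l₀}`) and `U = U₁ ⊗ U₂` with `U₁, U₂`
unitary. -/
theorem factorization_of_scalar_products
    (n m ι : Type) [Fintype n] [DecidableEq n] [Fintype m] [DecidableEq m]
    [Nonempty m] [Fintype ι]
    (T : ι → Matrix n n ℂ)
    (hT : LinearIndependent ℂ T ∧ Submodule.span ℂ (Set.range T) = ⊤)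
    (α : ι → m → m → ℂ)
    (U : Matrix (n × m) (n × m) ℂ)
    (hUdef : U = ∑ i, ∑ k, ∑ l,
      α i k l • (T i ⊗ₖ Matrix.single k l (1 : ℂ)))
    (hU : U ∈ Matrix.unitaryGroup (n × m) ℂ)
    (hscal : ∀ k k' l l' : m, ∃ lam : ℂ,
      (∑ i, α i k' l' • T i)ᴴ * (∑ i, α i k l • T i) = lam • (1 : Matrix n n ℂ)) :
    (∃ (k₀ l₀ : m) (β : m → m → ℂ), ∀ i k l, α i k l = β k l * α i k₀ l₀) ∧
    (∃ U₁ U₂, U₁ ∈ Matrix.unitaryGroup n ℂ ∧ U₂ ∈ Matrix.unitaryGroup m ℂ ∧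
      U = U₁ ⊗ₖ U₂) := by
  rcases isEmpty_or_nonempty n with hn | hn
  · have : IsEmpty ι := ⟨fun i => hT.1.ne_zero i (Subsingleton.elim _ _)⟩
    obtain ⟨k₀⟩ := ‹Nonempty m›
    exact ⟨⟨k₀, k₀, 0, fun i => isEmptyElim i⟩, 1, 1, one_mem _, one_mem _, Subsingleton.elim _ _⟩
  set S : m → m → Matrix n n ℂ := fun k l => ∑ i, α i k l • T i
  have hUS : U = ∑ k, ∑ l, S k l ⊗ₖ single k l 1 := hUdef.trans (sum_smul_kronecker_single α T)
  obtain ⟨k₀, l₀, hA0⟩ : ∃ k l, S k l ≠ 0 := by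
    by_contra! h
    exact (Unitary.isUnit_coe (U := ⟨U, hU⟩)).ne_zero (by simp [hUS, h])
  obtain ⟨c, hc⟩ := hscal k₀ k₀ l₀ l₀
  have hc0 : c ≠ 0 := by
    rintro rfl
    exact hA0 (conjTranspose_mul_self_eq_zero.mp (by rw [hc, zero_smul]))
  choose d hd using fun k l => hscal k k₀ l l₀
  set β : m → m → ℂ := fun k l => c⁻¹ * d k l
  have hSβ : ∀ k l, S k l = β k l • S k₀ l₀ :=
    fun k l => eq_smul_of_conjTranspose_mul_eq_smul_one hc0 hc (hd k l)
  refine ⟨⟨k₀, l₀, β, fun i k l => hT.1.eq_mul_of_sum_smul_eq_smul_sum (hSβ k l) i⟩, ?_⟩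
  have hUAB : U = S k₀ l₀ ⊗ₖ of β := by
    rw [kronecker_eq_sum_smul_kronecker_single, hUS]
    simp only [of_apply, ← hSβ]
  obtain ⟨t, ht0, ht⟩ := exists_smul_mem_unitaryGroup hc0 hc
  have hU' : U = (t • S k₀ l₀) ⊗ₖ (t⁻¹ • of β) := by
    rw [hUAB, smul_kronecker, kronecker_smul, smul_smul, mul_inv_cancel₀ ht0, one_smul]
  exact ⟨_, _, ht, mem_unitaryGroup_of_kronecker_mem ht (hU' ▸ hU), hU'⟩
end
end
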